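/- Let n ≥ 1. On the polynomial algebra ℂ[x₁,…,xₙ], for a ∈ {1,…,2n} let q̂ₐ denote the ℂ-linear endomorphism given by: multiplication by xₐ if 1 ≤ a ≤ n, and −i·∂/∂x_{a−n} if n+1 ≤ a ≤ 2n. For X ∈ Mat_{2n}(ℂ) with Xᵀ Jₙ + Jₙ X = 0, set π(X) = (i/2) Σ_{a,b=1}^{2n} (Jₙ X)_{b,a} · (q̂ₐ ∘ q̂_b). Then for all X, Y ∈ Mat_{2n}(ℂ) with Xᵀ Jₙ + Jₙ X = 0 and Yᵀ Jₙ + Jₙ Y = 0, one has π(X) ∘ π(Y) − π(Y) ∘ π(X) = π(XY − YX); that is, π is a Lie algebra homomorphism from sp_n(ℂ) into the endomorphisms of ℂ[x₁,…,xₙ] (the Schrödinger model of the oscillator representation). -/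

import Mathlib

open Matrix MvPolynomial

/-- The standard complex symplectic matrix `Jₙ = [[0, 1ₙ], [−1ₙ, 0]]`. -/
noncomputable def Jmat (n : ℕ) : Matrix (Fin n ⊕ Fin n) (Fin n ⊕ Fin n) ℂ :=
  Matrix.fromBlocks 0 1 (-1) 0

/-- The quantized coordinates `q̂ₐ` on `ℂ[x₁,…,xₙ]`: multiplication by `xₐ` for `a ≤ n`
(`Sum.inl`), and `−i ∂/∂x_{a−n}` for `a > n` (`Sum.inr`). -/
noncomputable def qop (n : ℕ) : Fin n ⊕ Fin n → Module.End ℂ (MvPolynomial (Fin n) ℂ)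
  | Sum.inl a => LinearMap.mulLeft ℂ (MvPolynomial.X a)
  | Sum.inr a => (-Complex.I) • (MvPolynomial.pderiv a).toLinearMap

/-- The quantized moment map representation
`π(X) = (i/2) Σ_{a,b} (Jₙ X)_{b,a} q̂ₐ ∘ q̂_b`. -/
noncomputable def oscRep (n : ℕ) (X : Matrix (Fin n ⊕ Fin n) (Fin n ⊕ Fin n) ℂ) :
    Module.End ℂ (MvPolynomial (Fin n) ℂ) :=
  (Complex.I / 2) • ∑ a : Fin n ⊕ Fin n, ∑ b : Fin n ⊕ Fin n,
    ((Jmat n * X) b a) • (qop n a * qop n b)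

/-!
The operators `q̂ₐ` satisfy the canonical commutation relations `[q̂ₐ, q̂_b] = i Jₐ_b`. In any
algebra where generators `qₐ` have scalar commutators `[qₐ, q_b] = ωₐ_b`, commuting with the
quadratic element `S(M) = Σ M_ba qₐ q_b` maps each `q_c` to a linear combination of the `qₐ` with
coefficients `(M + Mᵀ) ω`, so by the Leibniz rule `[S(M), S(N)]` is again quadratic, with
coefficient matrix `K N + N Kᵀ` where `K = (M + Mᵀ) ω`. For `M = J X` symmetric (that is,
`X ∈ sp_n`), `N = J Y` and `ω = i J`, this matrix is `-2i J [X, Y]`, and `(i/2)² (-2i) = i/2`.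
-/

lemma Ring.lie_mul {A : Type*} [Ring A] (x y z : A) : ⁅x, y * z⁆ = ⁅x, y⁆ * z + y * ⁅x, z⁆ := by
  simp only [Ring.lie_def]; noncomm_ring

lemma Ring.mul_lie {A : Type*} [Ring A] (x y z : A) : ⁅x * y, z⁆ = x * ⁅y, z⁆ + ⁅x, z⁆ * y := by
  simp only [Ring.lie_def]; noncomm_ring

section QuadraticSum

variable {R A ι : Type*} [CommRing R] [Ring A] [Algebra R A] [Fintype ι]

attribute [local instance] LieRing.ofAssociativeRing

def quadraticSum (q : ι → A) : Matrix ι ι R →ₗ[R] A where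
  toFun M := ∑ a, ∑ b, M b a • (q a * q b)
  map_add' M N := by simp only [Matrix.add_apply, add_smul, Finset.sum_add_distrib]
  map_smul' c M := by
    simp only [Matrix.smul_apply, smul_eq_mul, mul_smul, Finset.smul_sum, RingHom.id_apply]

lemma quadraticSum_apply (q : ι → A) (M : Matrix ι ι R) :
    quadraticSum q M = ∑ a, ∑ b, M b a • (q a * q b) := rfl

variable {ω : Matrix ι ι R} {q : ι → A}

lemma quadraticSum_lie (hq : ∀ a b, q a * q b - q b * q a = ω a b • (1 : A))
    (M : Matrix ι ι R) (c : ι) :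
    ⁅quadraticSum q M, q c⁆ = ∑ a, ((M + Mᵀ) * ω) a c • q a := by
  have hq' : ∀ a b, ⁅q a, q b⁆ = ω a b • (1 : A) := hq
  simp only [quadraticSum_apply, sum_lie, smul_lie, Ring.mul_lie, hq', mul_smul_comm,
    smul_mul_assoc, mul_one, one_mul, Finset.sum_add_distrib, smul_add, Matrix.mul_apply,
    Matrix.add_apply, Matrix.transpose_apply, add_mul, add_smul, Finset.sum_smul, smul_smul]
  rw [add_comm, Finset.sum_comm (f := fun a b => (M b a * ω a c) • q b)]

lemma quadraticSum_commutator (hq : ∀ a b, q a * q b - q b * q a = ω a b • (1 : A))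
    (M N : Matrix ι ι R) :
    quadraticSum q M * quadraticSum q N - quadraticSum q N * quadraticSum q M =
      quadraticSum q ((M + Mᵀ) * ω * N + N * ((M + Mᵀ) * ω)ᵀ) := by
  rw [← Ring.lie_def]
  have hK := quadraticSum_lie hq M
  generalize (M + Mᵀ) * ω = K at hK ⊢
  generalize quadraticSum q M = P at hK ⊢
  simp only [quadraticSum_apply, lie_sum, LieAlgebra.lie_smul, Ring.lie_mul, hK,
    Finset.sum_mul, Finset.mul_sum, smul_mul_assoc, mul_smul_comm, Finset.smul_sum, smul_smul,
    Finset.sum_add_distrib, smul_add, Matrix.add_apply, Matrix.mul_apply,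
    Matrix.transpose_apply, add_smul, Finset.sum_smul]
  rw [add_comm]
  congr 1
  · refine Finset.sum_congr rfl fun a _ => ?_
    rw [Finset.sum_comm]
    simp only [mul_comm]
  · exact Finset.sum_comm.trans
      ((Finset.sum_congr rfl fun _ _ => Finset.sum_comm).trans Finset.sum_comm)

end QuadraticSum

lemma quadraticSum_commutator_coeff {R l : Type*} [CommRing R] [Fintype l] [DecidableEq l]
    {J X Y : Matrix l l R} (c : R) (hJt : Jᵀ = -J) (hJJ : J * J = -1) (hX : (J * X).IsSymm) :
    (J * X + (J * X)ᵀ) * (c • J) * (J * Y) + J * Y * ((J * X + (J * X)ᵀ) * (c • J))ᵀ =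
      (-2 * c) • (J * (X * Y - Y * X)) := by
  have hJJ' (A : Matrix l l R) : A * J * J = -A := by
    rw [Matrix.mul_assoc, hJJ, Matrix.mul_neg, Matrix.mul_one]
  simp only [transpose_mul, transpose_smul, transpose_add, hX.eq, hJt, Matrix.mul_add,
    Matrix.add_mul, Matrix.smul_mul, Matrix.mul_smul, Matrix.neg_mul, Matrix.mul_neg,
    Matrix.mul_sub, ← Matrix.mul_assoc, hJJ']
  module

lemma MvPolynomial.pderiv_pderiv_comm {R σ : Type*} [CommRing R] (i j : σ)
    (p : MvPolynomial σ R) : pderiv i (pderiv j p) = pderiv j (pderiv i p) := by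
  have h : ⁅pderiv i, pderiv (R := R) j⁆ = 0 := derivation_ext fun k => by
    rw [Derivation.commutator_apply]
    classical simp [pderiv_X, Pi.single_apply, apply_ite]
  rw [← sub_eq_zero, ← Derivation.commutator_apply, h, Derivation.zero_apply]

lemma Jmat_eq_neg_J (n : ℕ) : Jmat n = -Matrix.J (Fin n) ℂ := by
  simp [Jmat, Matrix.J, Matrix.fromBlocks_neg]

lemma Jmat_transpose (n : ℕ) : (Jmat n)ᵀ = -Jmat n := by
  simp [Jmat_eq_neg_J]

lemma Jmat_mul_Jmat (n : ℕ) : Jmat n * Jmat n = -1 := by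
  simp [Jmat_eq_neg_J, Matrix.J_squared]

lemma isSymm_Jmat_mul {n : ℕ} {X : Matrix (Fin n ⊕ Fin n) (Fin n ⊕ Fin n) ℂ}
    (hX : Xᵀ * Jmat n + Jmat n * X = 0) : (Jmat n * X).IsSymm := by
  rw [Matrix.IsSymm, Matrix.transpose_mul, Jmat_transpose, Matrix.mul_neg,
    neg_eq_of_add_eq_zero_right hX]

lemma qop_commutator (n : ℕ) (a b : Fin n ⊕ Fin n) :
    qop n a * qop n b - qop n b * qop n a = (Complex.I • Jmat n) a b • 1 := by
  refine LinearMap.ext fun p => ?_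
  rcases a with i | i <;> rcases b with j | j <;>
    simp [Module.End.mul_apply, qop, Jmat, pderiv_X, Pi.single_apply, Matrix.one_apply,
      pderiv_pderiv_comm i j, mul_left_comm] <;>
    split_ifs <;> simp_all

lemma oscRep_eq_quadraticSum (n : ℕ) (X : Matrix (Fin n ⊕ Fin n) (Fin n ⊕ Fin n) ℂ) :
    oscRep n X = (Complex.I / 2) • quadraticSum (qop n) (Jmat n * X) := rfl

theorem oscRep_lie_hom_general (n : ℕ)
    (X Y : Matrix (Fin n ⊕ Fin n) (Fin n ⊕ Fin n) ℂ)
    (hX : Xᵀ * Jmat n + Jmat n * X = 0) :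
    oscRep n X * oscRep n Y - oscRep n Y * oscRep n X = oscRep n (X * Y - Y * X) := by
  have key := quadraticSum_commutator (qop_commutator n) (Jmat n * X) (Jmat n * Y)
  rw [quadraticSum_commutator_coeff Complex.I (Jmat_transpose n) (Jmat_mul_Jmat n)
    (isSymm_Jmat_mul hX), map_smul] at key
  have hc : Complex.I / 2 * (Complex.I / 2) * (-2 * Complex.I) = Complex.I / 2 := by
    linear_combination (-Complex.I / 2) * Complex.I_sq
  calc oscRep n X * oscRep n Y - oscRep n Y * oscRep n X
      = (Complex.I / 2 * (Complex.I / 2)) • (quadraticSum (qop n) (Jmat n * X) *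
          quadraticSum (qop n) (Jmat n * Y) - quadraticSum (qop n) (Jmat n * Y) *
          quadraticSum (qop n) (Jmat n * X)) := by
        simp only [oscRep_eq_quadraticSum, smul_mul_smul_comm]
        module
    _ = oscRep n (X * Y - Y * X) := by
        rw [key, smul_smul, hc, oscRep_eq_quadraticSum]

/-- The Schrödinger model of the oscillator representation: `π` is a Lie algebra
homomorphism from `sp_n(ℂ)` into the endomorphisms of `ℂ[x₁,…,xₙ]`. -/
theorem oscRep_lie_hom (n : ℕ) (hn : 1 ≤ n)
    (X Y : Matrix (Fin n ⊕ Fin n) (Fin n ⊕ Fin n) ℂ)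
    (hX : Xᵀ * Jmat n + Jmat n * X = 0)
    (hY : Yᵀ * Jmat n + Jmat n * Y = 0) :
    oscRep n X * oscRep n Y - oscRep n Y * oscRep n X = oscRep n (X * Y - Y * X) :=
  oscRep_lie_hom_general n X Y hX
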